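/- arXiv:2002.02441 — 4 statements merged into one kernel-verified Lean document; each statement's English description precedes it below -/
import Mathlib

section
/- Let m : (0,1] → [1,∞) be a decreasing function. Then there exists a C¹ function ρ : (0,1] → (0,∞) with ρ' positive and increasing such that max{ρ(δ), ρ'(δ)}·m(δ) ≤ δ for every δ ∈ (0,1]. -/
/-- for any decreasing `m : (0,1] → [1,∞)` there is a `C¹` function
`ρ : (0,1] → (0,∞)` with positive increasing derivative such that
`max{ρ(δ), ρ'(δ)}·m(δ) ≤ δ` on `(0,1]`. -/
theorem stmt_5 (m : ℝ → ℝ)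
    (hm1 : ∀ δ ∈ Set.Ioc (0 : ℝ) 1, 1 ≤ m δ)
    (hmono : AntitoneOn m (Set.Ioc (0 : ℝ) 1)) :
    ∃ ρ ρ' : ℝ → ℝ,
      (∀ δ ∈ Set.Ioc (0 : ℝ) 1, HasDerivAt ρ (ρ' δ) δ) ∧
      ContinuousOn ρ' (Set.Ioc (0 : ℝ) 1) ∧
      (∀ δ ∈ Set.Ioc (0 : ℝ) 1, 0 < ρ δ) ∧
      (∀ δ ∈ Set.Ioc (0 : ℝ) 1, 0 < ρ' δ) ∧
      MonotoneOn ρ' (Set.Ioc (0 : ℝ) 1) ∧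
      ∀ δ ∈ Set.Ioc (0 : ℝ) 1, max (ρ δ) (ρ' δ) * m δ ≤ δ := by
  classical
  -- the truncated reciprocal of `m`
  set M : ℝ → ℝ := fun r => if r ≤ 0 then 0 else 1 / m (min r 1) with hM
  have hMmem : ∀ r : ℝ, 0 < r → min r 1 ∈ Set.Ioc (0 : ℝ) 1 := fun r hr =>
    ⟨lt_min hr one_pos, min_le_right _ _⟩
  have hmpos : ∀ r ∈ Set.Ioc (0 : ℝ) 1, 0 < m r := fun r hr =>
    lt_of_lt_of_le one_pos (hm1 r hr)
  have hMval : ∀ r ∈ Set.Ioc (0 : ℝ) 1, M r = 1 / m r := by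
    intro r hr
    simp [hM, not_le.mpr hr.1, min_eq_left hr.2]
  have hMnonneg : ∀ r : ℝ, 0 ≤ M r := by
    intro r
    by_cases h : r ≤ 0
    · simp [hM, h]
    · push_neg at h
      simp only [hM, if_neg (not_le.mpr h)]
      exact le_of_lt (div_pos one_pos (hmpos _ (hMmem r h)))
  have hMle1 : ∀ r : ℝ, M r ≤ 1 := by
    intro r
    by_cases h : r ≤ 0
    · simp [hM, h]
    · push_neg at h
      simp only [hM, if_neg (not_le.mpr h)]
      rw [div_le_one (hmpos _ (hMmem r h))]
      exact hm1 _ (hMmem r h)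
  -- M is monotone on ℝ
  have hMmono : Monotone M := by
    intro a b hab
    by_cases ha : a ≤ 0
    · simp only [hM, if_pos ha]
      exact hMnonneg b
    · push_neg at ha
      have hb : ¬ b ≤ 0 := not_le.mpr (lt_of_lt_of_le ha hab)
      simp only [hM, if_neg (not_le.mpr ha), if_neg hb]
      have h1 : m (min b 1) ≤ m (min a 1) :=
        hmono (hMmem a ha) (hMmem b (lt_of_lt_of_le ha hab))
          (min_le_min hab le_rfl)
      exact one_div_le_one_div_of_le (hmpos _ (hMmem b (lt_of_lt_of_le ha hab))) h1
  have hMint : ∀ a b : ℝ, IntervalIntegrable M MeasureTheory.volume a b := fun a b =>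
    (hMmono.monotoneOn _).intervalIntegrable
  -- the derivative function
  set F : ℝ → ℝ := fun δ => ∫ t in (0:ℝ)..δ, M t with hF
  have hFsub : ∀ a b : ℝ, F b - F a = ∫ t in a..b, M t := by
    intro a b
    have := intervalIntegral.integral_add_adjacent_intervals (hMint 0 a) (hMint a b)
    simp only [hF]
    linarith [this]
  -- F is Lipschitz with constant 1, hence continuous
  have hFlip : LipschitzWith 1 F := by
    apply LipschitzWith.of_dist_le_mul
    intro a b
    rw [Real.dist_eq, Real.dist_eq]
    have h1 : F a - F b = ∫ t in b..a, M t := hFsub b a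
    rw [h1]
    have := intervalIntegral.norm_integral_le_of_norm_le_const
      (C := 1) (f := M) (a := b) (b := a) ?_
    · simpa [abs_sub_comm a b] using this
    · intro x _
      rw [Real.norm_eq_abs, abs_of_nonneg (hMnonneg x)]
      exact hMle1 x
  have hFcont : Continuous F := hFlip.continuous
  -- F is monotone
  have hFmono : Monotone F := by
    intro a b hab
    have : 0 ≤ ∫ t in a..b, M t :=
      intervalIntegral.integral_nonneg hab (fun u _ => hMnonneg u)
    linarith [hFsub a b]
  -- upper bound: F δ ≤ δ / m δ on (0,1]
  have hFub : ∀ δ ∈ Set.Ioc (0 : ℝ) 1, F δ ≤ δ / m δ := by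
    intro δ hδ
    have hle : ∀ x ∈ Set.Icc (0:ℝ) δ, M x ≤ 1 / m δ := by
      intro x hx
      by_cases h : x ≤ 0
      · simp only [hM, if_pos h]
        exact le_of_lt (div_pos one_pos (hmpos δ hδ))
      · push_neg at h
        have hx1 : x ∈ Set.Ioc (0:ℝ) 1 := ⟨h, le_trans hx.2 hδ.2⟩
        rw [hMval x hx1]
        exact one_div_le_one_div_of_le (hmpos δ hδ) (hmono hx1 hδ hx.2)
    have := intervalIntegral.integral_mono_on hδ.1.le (hMint 0 δ)
      (intervalIntegrable_const) hle
    simpa [hF, div_eq_mul_inv, mul_comm] using this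
  -- positivity of F on (0,1]
  have hFpos : ∀ δ ∈ Set.Ioc (0 : ℝ) 1, 0 < F δ := by
    intro δ hδ
    have hδ2 : δ / 2 ∈ Set.Ioc (0:ℝ) 1 := ⟨by linarith [hδ.1], by linarith [hδ.1, hδ.2]⟩
    have hlb : ∀ x ∈ Set.Icc (δ/2) δ, 1 / m (δ/2) ≤ M x := by
      intro x hx
      have hxpos : 0 < x := lt_of_lt_of_le hδ2.1 hx.1
      have hx1 : x ∈ Set.Ioc (0:ℝ) 1 := ⟨hxpos, le_trans hx.2 hδ.2⟩
      rw [hMval x hx1]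
      exact one_div_le_one_div_of_le (hmpos x hx1) (hmono hδ2 hx1 hx.1)
    have h2 : δ / 2 ≤ δ := by linarith [hδ.1]
    have := intervalIntegral.integral_mono_on h2 (intervalIntegrable_const)
      (hMint (δ/2) δ) hlb
    have hval : ∫ _ in (δ/2)..δ, (1 / m (δ/2)) = (δ - δ/2) * (1 / m (δ/2)) := by
      simp [mul_comm]
    have hpos : 0 < (δ - δ/2) * (1 / m (δ/2)) := by
      apply mul_pos (by linarith [hδ.1]) (div_pos one_pos (hmpos _ hδ2))
    have hF2 : 0 ≤ F (δ/2) := by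
      have := hFmono (le_of_lt hδ2.1)
      simpa [hF] using this
    have hint : (δ - δ/2) * (1 / m (δ/2)) ≤ F δ - F (δ/2) := by
      rw [hFsub (δ/2) δ]; rw [hval] at this; exact this
    linarith
  -- the function ρ
  set ρ : ℝ → ℝ := fun δ => ∫ t in (0:ℝ)..δ, F t with hρ
  have hFint : ∀ a b : ℝ, IntervalIntegrable F MeasureTheory.volume a b := fun a b =>
    hFcont.intervalIntegrable a b
  have hρsub : ∀ a b : ℝ, ρ b - ρ a = ∫ t in a..b, F t := by
    intro a b
    have := intervalIntegral.integral_add_adjacent_intervals (hFint 0 a) (hFint a b)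
    simp only [hρ]
    linarith [this]
  have hderiv : ∀ δ ∈ Set.Ioc (0 : ℝ) 1, HasDerivAt ρ (F δ) δ := by
    intro δ _
    exact intervalIntegral.integral_hasDerivAt_right (hFint 0 δ)
      (hFcont.stronglyMeasurableAtFilter _ _) hFcont.continuousAt
  have hFnonneg : ∀ r : ℝ, 0 ≤ F r ∨ True := fun _ => Or.inr trivial
  have hF0 : ∀ r : ℝ, 0 ≤ r → 0 ≤ F r := by
    intro r hr
    have := hFmono hr
    simpa [hF] using this
  -- ρ is positive on (0,1]
  have hρpos : ∀ δ ∈ Set.Ioc (0 : ℝ) 1, 0 < ρ δ := by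
    intro δ hδ
    have hδ2 : δ / 2 ∈ Set.Ioc (0:ℝ) 1 := ⟨by linarith [hδ.1], by linarith [hδ.1, hδ.2]⟩
    have h2 : δ / 2 ≤ δ := by linarith [hδ.1]
    have hlb : ∀ x ∈ Set.Icc (δ/2) δ, F (δ/2) ≤ F x := fun x hx => hFmono hx.1
    have hmon := intervalIntegral.integral_mono_on h2 (intervalIntegrable_const)
      (hFint (δ/2) δ) hlb
    have hval : ∫ _ in (δ/2)..δ, F (δ/2) = (δ - δ/2) * F (δ/2) := by simp [mul_comm]
    have hpos : 0 < (δ - δ/2) * F (δ/2) :=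
      mul_pos (by linarith [hδ.1]) (hFpos _ hδ2)
    have hρ2 : 0 ≤ ρ (δ/2) := by
      have : 0 ≤ ∫ t in (0:ℝ)..(δ/2), F t :=
        intervalIntegral.integral_nonneg (le_of_lt hδ2.1) (fun u hu => hF0 u hu.1)
      simpa [hρ] using this
    have hint : (δ - δ/2) * F (δ/2) ≤ ρ δ - ρ (δ/2) := by
      rw [hρsub (δ/2) δ]; rw [hval] at hmon; exact hmon
    linarith
  -- ρ δ ≤ δ * F δ ≤ δ / m δ on (0,1]
  have hρub : ∀ δ ∈ Set.Ioc (0 : ℝ) 1, ρ δ ≤ δ / m δ := by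
    intro δ hδ
    have hub : ∀ x ∈ Set.Icc (0:ℝ) δ, F x ≤ F δ := fun x hx => hFmono hx.2
    have hmon := intervalIntegral.integral_mono_on hδ.1.le (hFint 0 δ)
      (intervalIntegrable_const) hub
    have hval : ∫ _ in (0:ℝ)..δ, F δ = δ * F δ := by simp [mul_comm]
    have h1 : ρ δ ≤ δ * F δ := by rw [hρ]; rw [hval] at hmon; exact hmon
    have h2 : δ * F δ ≤ δ * (δ / m δ) :=
      mul_le_mul_of_nonneg_left (hFub δ hδ) hδ.1.le
    have h3 : δ * (δ / m δ) ≤ 1 * (δ / m δ) := by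
      apply mul_le_mul_of_nonneg_right hδ.2
      exact le_of_lt (div_pos hδ.1 (hmpos δ hδ))
    linarith
  refine ⟨ρ, F, hderiv, hFcont.continuousOn, hρpos, hFpos, hFmono.monotoneOn _, ?_⟩
  intro δ hδ
  rw [max_mul_of_nonneg _ _ (le_of_lt (hmpos δ hδ))]
  have h1 : ρ δ * m δ ≤ δ := (le_div_iff₀ (hmpos δ hδ)).mp (hρub δ hδ)
  have h2 : F δ * m δ ≤ δ := (le_div_iff₀ (hmpos δ hδ)).mp (hFub δ hδ)
  exact max_le h1 h2
end

section
/- The vector field f(x) = cos(‖x‖)·x on ℝⁿ is locally Lipschitz continuous, and for every direction y ∈ Sⁿ⁻¹ there exists a sequence xₖ → ∞ with xₖ/‖xₖ‖ = y and f(xₖ) = 0. Consequently, for any regularization function ρ and the stereographic projection h, the compactified vector field vanishes identically on the equator. -/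
open Filter Topology

lemma aux_cos_lip (a b : ℝ) : |Real.cos a - Real.cos b| ≤ |a - b| := by
  rw [Real.cos_sub_cos]
  calc |(-2) * Real.sin ((a + b) / 2) * Real.sin ((a - b) / 2)|
      = 2 * |Real.sin ((a + b) / 2)| * |Real.sin ((a - b) / 2)| := by
        rw [abs_mul, abs_mul]; norm_num
    _ ≤ 2 * 1 * |Real.sin ((a - b) / 2)| := by
        have := Real.abs_sin_le_one ((a + b) / 2)
        nlinarith [abs_nonneg (Real.sin ((a - b) / 2))]
    _ ≤ 2 * |(a - b) / 2| := by
        have := Real.abs_sin_le_abs (x := (a - b) / 2)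
        nlinarith
    _ = |a - b| := by rw [abs_div]; norm_num; ring

lemma aux_locallyLipschitz {n : ℕ} (f : EuclideanSpace ℝ (Fin n) → EuclideanSpace ℝ (Fin n))
    (hf : ∀ x, f x = Real.cos ‖x‖ • x) : LocallyLipschitz f := by
  intro x₀
  refine ⟨(2 + ‖x₀‖).toNNReal, Metric.ball x₀ 1, Metric.ball_mem_nhds _ one_pos, ?_⟩
  apply LipschitzOnWith.of_dist_le_mul
  intro a ha b hb
  rw [dist_eq_norm, dist_eq_norm, hf, hf]
  have key : Real.cos ‖a‖ • a - Real.cos ‖b‖ • b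
      = Real.cos ‖a‖ • (a - b) + (Real.cos ‖a‖ - Real.cos ‖b‖) • b := by
    rw [smul_sub, sub_smul]; abel
  rw [key]
  have hb' : ‖b‖ ≤ ‖x₀‖ + 1 := by
    have h1 := norm_sub_norm_le b x₀
    have h2 := (mem_ball_iff_norm.mp hb).le
    linarith
  have e1 : |Real.cos ‖a‖| * ‖a - b‖ ≤ 1 * ‖a - b‖ :=
    mul_le_mul_of_nonneg_right (Real.abs_cos_le_one _) (norm_nonneg _)
  have e2 : |Real.cos ‖a‖ - Real.cos ‖b‖| * ‖b‖ ≤ ‖a - b‖ * (‖x₀‖ + 1) := by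
    apply mul_le_mul _ hb' (norm_nonneg _) (norm_nonneg _)
    exact (aux_cos_lip _ _).trans (abs_norm_sub_norm_le a b)
  calc ‖Real.cos ‖a‖ • (a - b) + (Real.cos ‖a‖ - Real.cos ‖b‖) • b‖
      ≤ ‖Real.cos ‖a‖ • (a - b)‖ + ‖(Real.cos ‖a‖ - Real.cos ‖b‖) • b‖ := norm_add_le _ _
    _ = |Real.cos ‖a‖| * ‖a - b‖ + |Real.cos ‖a‖ - Real.cos ‖b‖| * ‖b‖ := by
        rw [norm_smul, norm_smul, Real.norm_eq_abs, Real.norm_eq_abs]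
    _ ≤ 1 * ‖a - b‖ + ‖a - b‖ * (‖x₀‖ + 1) := add_le_add e1 e2
    _ = (2 + ‖x₀‖).toNNReal * ‖a - b‖ := by
        rw [Real.coe_toNNReal _ (by positivity)]; ring

lemma aux_cos_zero (k : ℕ) : Real.cos (Real.pi / 2 + k * Real.pi) = 0 := by
  rw [Real.cos_add, Real.cos_pi_div_two, Real.sin_pi_div_two, Real.sin_nat_mul_pi]
  ring

/-- the field `f(x) = cos(‖x‖)·x` is locally Lipschitz, vanishes along a sequence
going to infinity in every direction, and consequently any compactified field (for the
stereographic projection and any regularization function) vanishes identically on the equator. -/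
theorem stmt_9 (n : ℕ)
    (f : EuclideanSpace ℝ (Fin n) → EuclideanSpace ℝ (Fin n))
    (hf : ∀ x, f x = Real.cos ‖x‖ • x)
    (E : Set (EuclideanSpace ℝ (Fin (n + 1))))
    (hE : E = {z : EuclideanSpace ℝ (Fin (n + 1)) | ‖z‖ = 1 ∧ z (Fin.last n) = 0})
    (north : EuclideanSpace ℝ (Fin (n + 1)))
    (hnorth : north = EuclideanSpace.single (Fin.last n) (1 : ℝ))
    (h : EuclideanSpace ℝ (Fin n) → EuclideanSpace ℝ (Fin (n + 1)))
    (hdef : ∀ x, h x = WithLp.toLp 2 (Fin.snoc (fun i => x i / Real.sqrt (1 + ‖x‖ ^ 2))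
      (1 / Real.sqrt (1 + ‖x‖ ^ 2)) : Fin (n + 1) → ℝ))
    (hinv : EuclideanSpace ℝ (Fin (n + 1)) → EuclideanSpace ℝ (Fin n))
    (hinvdef : ∀ z, hinv z = WithLp.toLp 2 (fun i => z i.castSucc / z (Fin.last n)))
    (g : EuclideanSpace ℝ (Fin (n + 1)) → EuclideanSpace ℝ (Fin (n + 1)))
    (hg : ∀ z, g z = fderiv ℝ h (hinv z) (f (hinv z))) :
    LocallyLipschitz f ∧
      (∀ y : EuclideanSpace ℝ (Fin n), ‖y‖ = 1 →
        ∃ x : ℕ → EuclideanSpace ℝ (Fin n),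
          Tendsto (fun k => ‖x k‖) atTop atTop ∧
          (∀ k, x k = ‖x k‖ • y) ∧ (∀ k, f (x k) = 0)) ∧
      ∀ ρ : ℝ → ℝ, (∀ δ ∈ Set.Ioc (0 : ℝ) 1, 0 < ρ δ) →
        ∀ z ∈ E, ∀ v : EuclideanSpace ℝ (Fin (n + 1)),
          Tendsto (fun δ => ρ δ • g (Real.sqrt (1 - δ ^ 2) • z + δ • north))
            (𝓝[>] (0 : ℝ)) (𝓝 v) → v = 0 := by
  set t : ℕ → ℝ := fun k => Real.pi / 2 + k * Real.pi with ht
  have htpos : ∀ k, 0 < t k := fun k => by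
    have h1 := Real.pi_pos
    have h2 : (0:ℝ) ≤ (k:ℝ) * Real.pi := by positivity
    simp only [ht]; linarith
  have httop : Tendsto t atTop atTop := by
    apply tendsto_atTop_add_const_left
    exact Tendsto.atTop_mul_const Real.pi_pos tendsto_natCast_atTop_atTop
  refine ⟨aux_locallyLipschitz f hf, ?_, ?_⟩
  · intro y hy
    have hnorm : ∀ k, ‖t k • y‖ = t k := fun k => by
      rw [norm_smul, Real.norm_eq_abs, abs_of_pos (htpos k), hy, mul_one]
    refine ⟨fun k => t k • y, ?_, fun k => by rw [hnorm], fun k => ?_⟩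
    · simpa only [hnorm] using httop
    · rw [hf, hnorm, aux_cos_zero k, zero_smul]
  · intro ρ hρ z hz v hv
    rw [hE] at hz
    obtain ⟨hz1, hz2⟩ := hz
    set δs : ℕ → ℝ := fun k => 1 / Real.sqrt (1 + t k ^ 2) with hδs
    have hs_pos : ∀ k, 0 < Real.sqrt (1 + t k ^ 2) := fun k =>
      Real.sqrt_pos.mpr (by positivity)
    have hδpos : ∀ k, 0 < δs k := fun k => by positivity
    have hδtend : Tendsto δs atTop (𝓝[>] (0:ℝ)) := by
      apply tendsto_nhdsWithin_of_tendsto_nhds_of_eventually_within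
      · apply squeeze_zero (fun k => (hδpos k).le) (g := fun k => 1 / t k)
        · intro k
          apply one_div_le_one_div_of_le (htpos k)
          rw [Real.le_sqrt (htpos k).le]
          · linarith [sq_nonneg (t k)]
          · positivity
        · simpa only [one_div, Function.comp_def] using tendsto_inv_atTop_zero.comp httop
      · exact Eventually.of_forall fun k => hδpos k
    -- g vanishes along the sequence
    have hkey : ∀ k, g (Real.sqrt (1 - δs k ^ 2) • z + δs k • north) = 0 := by
      intro k
      set s := Real.sqrt (1 + t k ^ 2) with hs
      have hsne : s ≠ 0 := (hs_pos k).ne'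
      have hs2 : s ^ 2 = 1 + t k ^ 2 := Real.sq_sqrt (by positivity)
      have hδ2 : (δs k) ^ 2 = 1 / (1 + t k ^ 2) := by
        simp only [hδs, div_pow, one_pow, ← hs, hs2]
      have h1mδ : 1 - δs k ^ 2 = t k ^ 2 / (1 + t k ^ 2) := by
        rw [hδ2]; field_simp; ring
      have hsqrt : Real.sqrt (1 - δs k ^ 2) = t k / s := by
        rw [h1mδ, Real.sqrt_div (sq_nonneg _), Real.sqrt_sq (htpos k).le, hs]
      set w : EuclideanSpace ℝ (Fin (n + 1)) :=
        Real.sqrt (1 - δs k ^ 2) • z + δs k • north with hw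
      have hwlast : w (Fin.last n) = δs k := by
        simp [hw, hnorth, PiLp.add_apply, PiLp.smul_apply, hz2,
          EuclideanSpace.single_apply]
      have hwcast : ∀ i : Fin n, w i.castSucc = (t k / s) * z i.castSucc := by
        intro i
        have : (i.castSucc : Fin (n+1)) ≠ Fin.last n := (Fin.castSucc_lt_last i).ne
        simp [hw, hnorth, PiLp.add_apply, PiLp.smul_apply,
          EuclideanSpace.single_apply, this, hsqrt]
      set z' : EuclideanSpace ℝ (Fin n) := WithLp.toLp 2 (fun i => z i.castSucc) with hz'
      have hinvw : hinv w = t k • z' := by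
        rw [hinvdef]
        ext i
        simp only [PiLp.toLp_apply]
        rw [hwcast i, hwlast]
        simp only [PiLp.smul_apply, hz', smul_eq_mul, hδs]
        field_simp
        rw [hs]; ring
      have hz'norm : ‖z'‖ = 1 := by
        have hzn : ‖z‖ = Real.sqrt (∑ i, ‖z i‖ ^ 2) := EuclideanSpace.norm_eq z
        have hsum : ∑ i, ‖z i‖ ^ 2 = ∑ i : Fin n, ‖z' i‖ ^ 2 := by
          rw [Fin.sum_univ_castSucc]
          simp [hz2, hz']
        rw [EuclideanSpace.norm_eq, ← hsum, ← hzn, hz1]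
      have hninvw : ‖hinv w‖ = t k := by
        rw [hinvw, norm_smul, Real.norm_eq_abs, abs_of_pos (htpos k), hz'norm, mul_one]
      have hfz : f (hinv w) = 0 := by
        rw [hf, hninvw, aux_cos_zero k, zero_smul]
      rw [hg, hfz, map_zero]
    have hcomp : Tendsto (fun k => ρ (δs k) •
        g (Real.sqrt (1 - δs k ^ 2) • z + δs k • north)) atTop (𝓝 v) :=
      hv.comp hδtend
    have hzero : (fun k => ρ (δs k) •
        g (Real.sqrt (1 - δs k ^ 2) • z + δs k • north)) = fun _ => (0 : EuclideanSpace ℝ (Fin (n+1))) := by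
      funext k; rw [hkey k, smul_zero]
    rw [hzero] at hcomp
    exact tendsto_nhds_unique hcomp tendsto_const_nhds
end

section
/- Let f be non-null Poincaré compactifiable (for the stereographic projection h) with compactified field F_ρ. Then the equator E is invariant under the flow of F_ρ (equivalently, the (n+1)-st component of F_ρ vanishes on E) if and only if for every z ∈ E, lim_{δ→0⁺} δ²ρ(δ)·f(h⁻¹(z_δ)) = 0, where z_δ = z√(1−δ²)+δe^{n+1}. -/
open Filter Topology RealInnerProductSpace

lemma sqrtInv_hasFDerivAt {n : ℕ} (x : EuclideanSpace ℝ (Fin n)) :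
    HasFDerivAt (fun y : EuclideanSpace ℝ (Fin n) => (Real.sqrt (1 + ‖y‖ ^ 2))⁻¹)
      (-(((1 + ‖x‖ ^ 2) * Real.sqrt (1 + ‖x‖ ^ 2))⁻¹) • (innerSL ℝ x)) x := by
  have hpos : (0:ℝ) < 1 + ‖x‖ ^ 2 := by positivity
  have hsq : Real.sqrt (1 + ‖x‖ ^ 2) ≠ 0 := by positivity
  have h1 : HasFDerivAt (fun y : EuclideanSpace ℝ (Fin n) => 1 + ‖y‖ ^ 2)
      ((2:ℝ) • innerSL ℝ x) x := by
    have hfun : (fun y : EuclideanSpace ℝ (Fin n) => 1 + ‖y‖ ^ 2)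
        = fun y => 1 + ⟪y, y⟫ := by
      funext y; rw [real_inner_self_eq_norm_sq]
    rw [hfun]
    have h0 := ((hasFDerivAt_id x).inner ℝ (hasFDerivAt_id x)).const_add 1
    refine h0.congr_fderiv ?_
    symm
    ext v
    simp [fderivInnerCLM_apply, two_smul, real_inner_comm, mul_comm]
  have h2 : HasDerivAt (fun t : ℝ => (Real.sqrt t)⁻¹)
      (-(1 / (2 * Real.sqrt (1 + ‖x‖ ^ 2))) / (Real.sqrt (1 + ‖x‖ ^ 2)) ^ 2) (1 + ‖x‖ ^ 2) :=
    (Real.hasDerivAt_sqrt (ne_of_gt hpos)).inv hsq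
  have h3 := h2.comp_hasFDerivAt x h1
  refine h3.congr_fderiv ?_
  symm
  rw [smul_smul]
  congr 1
  rw [Real.sq_sqrt hpos.le]
  field_simp

lemma fderiv_h_apply {n : ℕ}
    (h : EuclideanSpace ℝ (Fin n) → EuclideanSpace ℝ (Fin (n + 1)))
    (hdef : ∀ x, h x = WithLp.toLp 2 (Fin.snoc (fun i => x i / Real.sqrt (1 + ‖x‖ ^ 2))
      (1 / Real.sqrt (1 + ‖x‖ ^ 2))))
    (x v : EuclideanSpace ℝ (Fin n)) :
    (fderiv ℝ h x v) (Fin.last n)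
        = -(⟪x, v⟫ * ((1 + ‖x‖ ^ 2) * Real.sqrt (1 + ‖x‖ ^ 2))⁻¹)
    ∧ ∀ i : Fin n, (fderiv ℝ h x v) i.castSucc
        = v i * (Real.sqrt (1 + ‖x‖ ^ 2))⁻¹
          - x i * (⟪x, v⟫ * ((1 + ‖x‖ ^ 2) * Real.sqrt (1 + ‖x‖ ^ 2))⁻¹) := by
  have hlastf : HasFDerivAt (fun y => h y (Fin.last n))
      (-(((1 + ‖x‖ ^ 2) * Real.sqrt (1 + ‖x‖ ^ 2))⁻¹) • (innerSL ℝ x)) x := by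
    have heq : (fun y => h y (Fin.last n))
        = fun y : EuclideanSpace ℝ (Fin n) => (Real.sqrt (1 + ‖y‖ ^ 2))⁻¹ := by
      funext y; rw [hdef]; simp [Fin.snoc_last]
    rw [heq]; exact sqrtInv_hasFDerivAt x
  have hproj : ∀ i : Fin n, HasFDerivAt (fun y : EuclideanSpace ℝ (Fin n) => y i)
      (EuclideanSpace.proj (𝕜 := ℝ) i) x := fun i => by
    have := (EuclideanSpace.proj (𝕜 := ℝ) i : EuclideanSpace ℝ (Fin n) →L[ℝ] ℝ).hasFDerivAt (x := x)
    convert this using 1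
    funext y; rfl
  have hcast : ∀ i : Fin n, HasFDerivAt (fun y => h y i.castSucc)
      (x i • (-(((1 + ‖x‖ ^ 2) * Real.sqrt (1 + ‖x‖ ^ 2))⁻¹) • (innerSL ℝ x))
        + (Real.sqrt (1 + ‖x‖ ^ 2))⁻¹ • (EuclideanSpace.proj i :
            EuclideanSpace ℝ (Fin n) →L[ℝ] ℝ)) x := by
    intro i
    have heq : (fun y => h y i.castSucc)
        = fun y : EuclideanSpace ℝ (Fin n) => y i * (Real.sqrt (1 + ‖y‖ ^ 2))⁻¹ := by
      funext y; rw [hdef]; simp [Fin.snoc_castSucc, div_eq_mul_inv]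
    rw [heq]
    exact (hproj i).mul (sqrtInv_hasFDerivAt x)
  have hdiff : DifferentiableAt ℝ h x := by
    refine (differentiableAt_piLp _).2 ?_
    intro j
    refine Fin.lastCases ?_ ?_ j
    · exact hlastf.differentiableAt
    · exact fun i => (hcast i).differentiableAt
  have hj : ∀ j : Fin (n+1), HasFDerivAt (fun y => h y j)
      ((EuclideanSpace.proj j).comp (fderiv ℝ h x)) x :=
    fun j => by
    have := ((EuclideanSpace.proj (𝕜 := ℝ) j :
        EuclideanSpace ℝ (Fin (n+1)) →L[ℝ] ℝ)).hasFDerivAt.comp x hdiff.hasFDerivAt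
    exact this
  constructor
  · have := ((hj (Fin.last n)).unique hlastf)
    have h2 := congrArg (fun (L : EuclideanSpace ℝ (Fin n) →L[ℝ] ℝ) => L v) this
    simp at h2
    rw [h2]
    simp [PiLp.inner_apply, RCLike.inner_apply]
    ring
  · intro i
    have := ((hj i.castSucc).unique (hcast i))
    have h2 := congrArg (fun (L : EuclideanSpace ℝ (Fin n) →L[ℝ] ℝ) => L v) this
    simp at h2
    rw [h2]
    simp [PiLp.inner_apply, RCLike.inner_apply]
    ring

/-- for a non-null Poincaré compactifiable field `f` (stereographic projection),
the equator is invariant under the compactified field `F_ρ` (i.e. its last component vanishes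
on `E`) iff `lim_{δ→0⁺} δ²ρ(δ)·f(h⁻¹(z_δ)) = 0` for every `z ∈ E`. -/
theorem stmt_11 (n : ℕ)
    (E Hplus : Set (EuclideanSpace ℝ (Fin (n + 1))))
    (hE : E = {z : EuclideanSpace ℝ (Fin (n + 1)) | ‖z‖ = 1 ∧ z (Fin.last n) = 0})
    (hH : Hplus = {z : EuclideanSpace ℝ (Fin (n + 1)) | ‖z‖ = 1 ∧ 0 < z (Fin.last n)})
    (north : EuclideanSpace ℝ (Fin (n + 1)))
    (hnorth : north = EuclideanSpace.single (Fin.last n) (1 : ℝ))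
    (f : EuclideanSpace ℝ (Fin n) → EuclideanSpace ℝ (Fin n))
    (hf : LocallyLipschitz f)
    (h : EuclideanSpace ℝ (Fin n) → EuclideanSpace ℝ (Fin (n + 1)))
    (hdef : ∀ x, h x = WithLp.toLp 2 (Fin.snoc (fun i => x i / Real.sqrt (1 + ‖x‖ ^ 2))
      (1 / Real.sqrt (1 + ‖x‖ ^ 2))))
    (hinv : EuclideanSpace ℝ (Fin (n + 1)) → EuclideanSpace ℝ (Fin n))
    (hinvdef : ∀ z, hinv z = WithLp.toLp 2 (fun i => z i.castSucc / z (Fin.last n)))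
    (ρ : ℝ → ℝ) (hρpos : ∀ δ ∈ Set.Ioc (0 : ℝ) 1, 0 < ρ δ)
    (F : EuclideanSpace ℝ (Fin (n + 1)) → EuclideanSpace ℝ (Fin (n + 1)))
    (L : NNReal) (hFLip : LipschitzOnWith L F (Hplus ∪ E))
    (hFH : ∀ z ∈ Hplus,
      F z = ρ (z (Fin.last n)) • fderiv ℝ h (hinv z) (f (hinv z)))
    -- the compactification is non-null
    (hnonnull : ∃ z ∈ E, F z ≠ 0) :
    (∀ z ∈ E, F z (Fin.last n) = 0) ↔
      ∀ z ∈ E, Tendsto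
        (fun δ : ℝ => (δ ^ 2 * ρ δ) • f (hinv (Real.sqrt (1 - δ ^ 2) • z + δ • north)))
        (𝓝[>] (0 : ℝ)) (𝓝 0) := by
  -- truncation continuous linear map
  let Tl : EuclideanSpace ℝ (Fin (n + 1)) →ₗ[ℝ] EuclideanSpace ℝ (Fin n) :=
    { toFun := fun v => (WithLp.toLp 2 (fun i => v i.castSucc) : EuclideanSpace ℝ (Fin n))
      map_add' := fun a b => by ext i; simp [PiLp.add_apply]
      map_smul' := fun c a => by ext i; simp [PiLp.smul_apply] }
  let T : EuclideanSpace ℝ (Fin (n + 1)) →L[ℝ] EuclideanSpace ℝ (Fin n) :=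
    Tl.toContinuousLinearMap
  have hT_apply : ∀ (v : EuclideanSpace ℝ (Fin (n + 1))) (i : Fin n),
      T v i = v i.castSucc := fun v i => rfl
  have key : ∀ z : EuclideanSpace ℝ (Fin (n + 1)), ‖z‖ = 1 → z (Fin.last n) = 0 →
      ((F z (Fin.last n) = 0) ↔ Tendsto
        (fun δ : ℝ => (δ ^ 2 * ρ δ) • f (hinv (Real.sqrt (1 - δ ^ 2) • z + δ • north)))
        (𝓝[>] (0 : ℝ)) (𝓝 0)) := by
    intro z hz1 hz2
    set zd : ℝ → EuclideanSpace ℝ (Fin (n + 1)) :=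
      fun δ => Real.sqrt (1 - δ ^ 2) • z + δ • north with hzddef
    set Pz : EuclideanSpace ℝ (Fin n) := WithLp.toLp 2 (fun i => z i.castSucc) with hPzdef
    have hnl : north (Fin.last n) = 1 := by
      rw [hnorth]; simp [EuclideanSpace.single_apply]
    have hnc : ∀ i : Fin n, north i.castSucc = 0 := by
      intro i; rw [hnorth]
      simp [EuclideanSpace.single_apply, (Fin.castSucc_lt_last i).ne]
    have hzdl : ∀ δ : ℝ, zd δ (Fin.last n) = δ := by
      intro δ
      simp [hzddef, PiLp.add_apply, PiLp.smul_apply, hz2, hnl]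
    have hzdc : ∀ (δ : ℝ) (i : Fin n),
        zd δ i.castSucc = Real.sqrt (1 - δ ^ 2) * z i.castSucc := by
      intro δ i
      simp [hzddef, PiLp.add_apply, PiLp.smul_apply, hnc i]
    have hinner : ⟪z, north⟫ = 0 := by
      rw [hnorth, EuclideanSpace.inner_single_right]
      simp [hz2]
    have hnn : ‖north‖ = 1 := by rw [hnorth]; simp
    have hzdnorm : ∀ δ ∈ Set.Ioo (0:ℝ) 1, ‖zd δ‖ = 1 := by
      intro δ hδ
      have h0 : (0:ℝ) ≤ 1 - δ ^ 2 := by nlinarith [hδ.1, hδ.2]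
      have hsq : ‖zd δ‖ ^ 2 = 1 := by
        rw [hzddef]
        rw [norm_add_sq_real]
        rw [real_inner_smul_left, real_inner_smul_right, hinner]
        rw [norm_smul, norm_smul, hz1, hnn]
        simp [abs_of_nonneg (Real.sqrt_nonneg _), mul_pow, Real.sq_sqrt h0]
      nlinarith [norm_nonneg (zd δ), hsq]
    have hzdH : ∀ δ ∈ Set.Ioo (0:ℝ) 1, zd δ ∈ Hplus := by
      intro δ hδ
      rw [hH]
      exact ⟨hzdnorm δ hδ, by rw [hzdl]; exact hδ.1⟩
    have hzE : z ∈ E := by rw [hE]; exact ⟨hz1, hz2⟩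
    -- the preimage points
    have hx : ∀ δ ∈ Set.Ioo (0:ℝ) 1,
        hinv (zd δ) = (Real.sqrt (1 - δ ^ 2) / δ) • Pz := by
      intro δ hδ
      rw [hinvdef]
      ext i
      rw [WithLp.ofLp_toLp, hzdc, hzdl]
      simp [PiLp.smul_apply, hPzdef, div_eq_mul_inv]
      ring
    have hPznorm : ‖Pz‖ = 1 := by
      have h1 : (∑ j : Fin (n+1), ‖z j‖ ^ 2) = (∑ i : Fin n, ‖Pz i‖ ^ 2) := by
        rw [Fin.sum_univ_castSucc]
        simp [hz2, hPzdef]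
      have h2 := EuclideanSpace.norm_eq z
      have h3 := EuclideanSpace.norm_eq Pz
      rw [h3, ← h1, ← h2, hz1]
    have hxnorm : ∀ δ ∈ Set.Ioo (0:ℝ) 1,
        1 + ‖hinv (zd δ)‖ ^ 2 = (δ⁻¹) ^ 2 ∧ Real.sqrt (1 + ‖hinv (zd δ)‖ ^ 2) = δ⁻¹ := by
      intro δ hδ
      have h0 : (0:ℝ) ≤ 1 - δ ^ 2 := by nlinarith [hδ.1, hδ.2]
      have hδ0 : δ ≠ 0 := ne_of_gt hδ.1
      have h1 : ‖hinv (zd δ)‖ = Real.sqrt (1 - δ ^ 2) / δ := by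
        rw [hx δ hδ, norm_smul, hPznorm, mul_one]
        rw [Real.norm_eq_abs, abs_of_nonneg (div_nonneg (Real.sqrt_nonneg _) hδ.1.le)]
      have h2 : 1 + ‖hinv (zd δ)‖ ^ 2 = (δ⁻¹) ^ 2 := by
        rw [h1, div_pow, Real.sq_sqrt h0]
        field_simp
        ring
      refine ⟨h2, ?_⟩
      rw [h2, Real.sqrt_sq (inv_nonneg.2 hδ.1.le)]
    -- component formulas for F on the flow line
    have hFA : ∀ δ ∈ Set.Ioo (0:ℝ) 1,
        F (zd δ) (Fin.last n)
          = ρ δ * (-(⟪hinv (zd δ), f (hinv (zd δ))⟫ * δ ^ 3)) := by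
      intro δ hδ
      have hδ0 : δ ≠ 0 := ne_of_gt hδ.1
      have hFz := hFH (zd δ) (hzdH δ hδ)
      rw [hzdl] at hFz
      rw [hFz, PiLp.smul_apply, smul_eq_mul]
      congr 1
      rw [(fderiv_h_apply h hdef (hinv (zd δ)) (f (hinv (zd δ)))).1]
      rw [(hxnorm δ hδ).2, (hxnorm δ hδ).1]
      congr 2
      rw [mul_inv, inv_inv, ← inv_pow, inv_inv]
      ring
    have hFB : ∀ δ ∈ Set.Ioo (0:ℝ) 1, ∀ i : Fin n,
        F (zd δ) i.castSucc
          = ρ δ * (f (hinv (zd δ)) i * δ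
              - hinv (zd δ) i * (⟪hinv (zd δ), f (hinv (zd δ))⟫ * δ ^ 3)) := by
      intro δ hδ i
      have hFz := hFH (zd δ) (hzdH δ hδ)
      rw [hzdl] at hFz
      rw [hFz, PiLp.smul_apply, smul_eq_mul]
      congr 1
      rw [(fderiv_h_apply h hdef (hinv (zd δ)) (f (hinv (zd δ)))).2 i]
      rw [(hxnorm δ hδ).2, (hxnorm δ hδ).1]
      have e1 : ((δ⁻¹:ℝ) ^ 2 * δ⁻¹)⁻¹ = δ ^ 3 := by
        rw [mul_inv, inv_inv, ← inv_pow, inv_inv]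
        ring
      rw [e1, inv_inv]
    -- eventual set
    have hmem : Set.Ioo (0:ℝ) 1 ∈ 𝓝[>] (0:ℝ) :=
      Ioo_mem_nhdsGT_of_mem ⟨le_refl 0, zero_lt_one⟩
    -- Key identity A
    have keyA : ∀ δ ∈ Set.Ioo (0:ℝ) 1,
        F (zd δ) (Fin.last n)
          = -⟪Real.sqrt (1 - δ ^ 2) • Pz, (δ ^ 2 * ρ δ) • f (hinv (zd δ))⟫ := by
      intro δ hδ
      have hδ0 : δ ≠ 0 := ne_of_gt hδ.1
      rw [hFA δ hδ, real_inner_smul_left, real_inner_smul_right]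
      have hxi : ⟪hinv (zd δ), f (hinv (zd δ))⟫
          = (Real.sqrt (1 - δ ^ 2) / δ) * ⟪Pz, f (hinv (zd δ))⟫ := by
        rw [hx δ hδ, real_inner_smul_left]
      rw [hxi]
      field_simp
    -- Key identity B
    have keyB : ∀ δ ∈ Set.Ioo (0:ℝ) 1,
        (δ ^ 2 * ρ δ) • f (hinv (zd δ))
          = δ • T (F (zd δ))
            - (F (zd δ) (Fin.last n)) • (Real.sqrt (1 - δ ^ 2) • Pz) := by
      intro δ hδ
      have hδ0 : δ ≠ 0 := ne_of_gt hδ.1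
      ext i
      rw [PiLp.smul_apply]
      rw [PiLp.sub_apply, PiLp.smul_apply, PiLp.smul_apply, PiLp.smul_apply]
      rw [hT_apply, hFB δ hδ i, hFA δ hδ]
      have hxi : hinv (zd δ) i = (Real.sqrt (1 - δ ^ 2) / δ) * Pz i := by
        rw [hx δ hδ, PiLp.smul_apply, smul_eq_mul]
      rw [hxi]
      simp only [smul_eq_mul]
      field_simp
      ring
    -- limits
    have hzdcont : Continuous zd := by
      have c1 : Continuous fun δ : ℝ => Real.sqrt (1 - δ ^ 2) • z :=
        ((Real.continuous_sqrt.comp (continuous_const.sub (continuous_pow 2))).smul continuous_const)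
      have c2 : Continuous fun δ : ℝ => δ • north :=
        (continuous_id.smul continuous_const)
      exact c1.add c2
    have hzd0 : zd 0 = z := by
      rw [hzddef]
      simp
    have hzdt : Tendsto zd (𝓝[>] (0:ℝ)) (𝓝[Hplus ∪ E] z) := by
      rw [tendsto_nhdsWithin_iff]
      constructor
      · have := hzdcont.continuousAt (x := (0:ℝ))
        rw [ContinuousAt, hzd0] at this
        exact this.mono_left nhdsWithin_le_nhds
      · filter_upwards [hmem] with δ hδ
        exact Or.inl (hzdH δ hδ)
    have hFt : Tendsto (fun δ => F (zd δ)) (𝓝[>] (0:ℝ)) (𝓝 (F z)) := by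
      have hc : ContinuousWithinAt F (Hplus ∪ E) z :=
        hFLip.continuousOn z (Or.inr hzE)
      exact hc.tendsto.comp hzdt
    have hlastt : Tendsto (fun δ => F (zd δ) (Fin.last n)) (𝓝[>] (0:ℝ))
        (𝓝 (F z (Fin.last n))) := by
      have hc : Continuous fun v : EuclideanSpace ℝ (Fin (n+1)) => v (Fin.last n) :=
        PiLp.continuous_apply _ _ _
      exact (hc.tendsto _).comp hFt
    have hTt : Tendsto (fun δ => T (F (zd δ))) (𝓝[>] (0:ℝ)) (𝓝 (T (F z))) :=
      (T.continuous.tendsto _).comp hFt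
    have hδt : Tendsto (fun δ : ℝ => δ) (𝓝[>] (0:ℝ)) (𝓝 0) :=
      tendsto_id.mono_left nhdsWithin_le_nhds
    have hsqt : Tendsto (fun δ : ℝ => Real.sqrt (1 - δ ^ 2) • Pz) (𝓝[>] (0:ℝ)) (𝓝 Pz) := by
      have c1 : Continuous fun δ : ℝ => Real.sqrt (1 - δ ^ 2) • Pz :=
        ((Real.continuous_sqrt.comp (continuous_const.sub (continuous_pow 2))).smul continuous_const)
      have h0 : Real.sqrt (1 - (0:ℝ) ^ 2) • Pz = Pz := by simp
      have := c1.continuousAt (x := (0:ℝ))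
      rw [ContinuousAt, h0] at this
      exact this.mono_left nhdsWithin_le_nhds
    constructor
    · intro hF0
      have h1 : Tendsto (fun δ : ℝ => δ • T (F (zd δ))
          - (F (zd δ) (Fin.last n)) • (Real.sqrt (1 - δ ^ 2) • Pz))
          (𝓝[>] (0:ℝ)) (𝓝 0) := by
        have t1 : Tendsto (fun δ : ℝ => δ • T (F (zd δ))) (𝓝[>] (0:ℝ))
            (𝓝 ((0:ℝ) • T (F z))) := hδt.smul hTt
        have t2 : Tendsto (fun δ : ℝ => (F (zd δ) (Fin.last n)) •
            (Real.sqrt (1 - δ ^ 2) • Pz)) (𝓝[>] (0:ℝ)) (𝓝 ((0:ℝ) • Pz)) := by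
          have t2 := hlastt.smul hsqt
          rw [hF0] at t2
          exact t2
        have := t1.sub t2
        simpa using this
      refine Tendsto.congr' ?_ h1
      filter_upwards [hmem] with δ hδ
      exact (keyB δ hδ).symm
    · intro hlim
      have h2 : Tendsto (fun δ => F (zd δ) (Fin.last n)) (𝓝[>] (0:ℝ)) (𝓝 0) := by
        have t1 : Tendsto (fun δ : ℝ =>
            -⟪Real.sqrt (1 - δ ^ 2) • Pz, (δ ^ 2 * ρ δ) • f (hinv (zd δ))⟫)
            (𝓝[>] (0:ℝ)) (𝓝 (-⟪Pz, (0 : EuclideanSpace ℝ (Fin n))⟫)) :=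
          (hsqt.inner hlim).neg
        rw [inner_zero_right, neg_zero] at t1
        refine Tendsto.congr' ?_ t1
        filter_upwards [hmem] with δ hδ
        exact (keyA δ hδ).symm
      exact tendsto_nhds_unique hlastt h2
  constructor
  · intro H z hz
    have hz' := hz
    rw [hE] at hz'
    exact (key z hz'.1 hz'.2).1 (H z hz)
  · intro H z hz
    have hz' := hz
    rw [hE] at hz'
    exact (key z hz'.1 hz'.2).2 (H z hz)
end

section
/- Let f(x) = Ax + φ(e₁ᵀx)·b be a continuous piecewise linear vector field in Lure form, where φ is continuous piecewise linear with outer slopes α₀ (for σ ≤ τ₁) and α_p (for σ ≥ τ_p), and let A₀ = A + α₀ b e₁ᵀ, A_p = A + α_p b e₁ᵀ. The projected vector field g(z) = (I − π(z)π(z)ᵀ ; −z_{n+1}π(z)ᵀ)·(A π(z) + z_{n+1} φ(z₁/z_{n+1}) b), extended to the equator, is identically zero on the equator if and only if A₀ = λ₀ I and A_p = λ_p I for some scalars λ₀, λ_p. -/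
/-!
On the equator the extended field at `z` is `((I - u uᵀ) M u, 0)` with `u = π(z)` a unit vector
and `M` the outer matrix of the half-space containing `z`. It vanishes exactly when `M u` is a
multiple of `u`, so the field vanishes on the equator iff every unit vector of an open
half-sphere is an eigenvector of `M`. After rescaling, this says that every `v` with `v₁ = 1` is
an eigenvector; testing `e₁` and `e₁ ± e_j` forces `M` to be scalar.
-/

open Matrix

namespace Matrix

section Field

variable {K ι : Type*} [Field K] [Fintype ι]

theorem exists_eq_smul_one_of_forall_apply_eq_one [DecidableEq ι] [NeZero (2 : K)]
    (M : Matrix ι ι K) (i : ι)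
    (h : ∀ v : ι → K, v i = 1 → ∃ c : K, M *ᵥ v = c • v) :
    ∃ c : K, M = c • 1 := by
  obtain ⟨c, hc⟩ := h (Pi.single i 1) (by simp)
  have hcol : ∀ k, M k i = if k = i then c else 0 := by
    intro k
    simpa [mulVec_single, Pi.single_apply] using congrFun hc k
  have hpair : ∀ j ≠ i, ∀ a : K, a ≠ 0 →
      M j j = c + a * M i j ∧ ∀ k ≠ i, k ≠ j → M k j = 0 := by
    intro j hj a ha
    obtain ⟨d, hd⟩ := h (Pi.single i 1 + a • Pi.single j 1) (by simp [hj.symm])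
    have hd_apply : ∀ k, M k i + a * M k j =
        d * ((if k = i then 1 else 0) + a * if k = j then 1 else 0) := by
      intro k
      simpa [mulVec_add, mulVec_smul, mulVec_single, Pi.single_apply] using congrFun hd k
    have hdj : d = M j j := by
      have := hd_apply j
      simp only [hcol, hj, if_false, if_true, zero_add, mul_one] at this
      exact (mul_left_cancel₀ ha (this.trans (mul_comm d a))).symm
    refine ⟨?_, fun k hki hkj => ?_⟩
    · simpa [hcol, hj.symm, hdj] using (hd_apply i).symm
    · simpa [hcol, hki, hkj, ha] using hd_apply k
  refine ⟨c, ext fun k j => ?_⟩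
  rcases eq_or_ne j i with rfl | hj
  · simpa [one_apply, eq_comm] using hcol k
  obtain ⟨hplus, hoff⟩ := hpair j hj 1 one_ne_zero
  obtain ⟨hminus, -⟩ := hpair j hj (-1) (neg_ne_zero.mpr one_ne_zero)
  have hij : M i j = 0 := by
    have : (2 : K) * M i j = 0 := by linear_combination hminus - hplus
    exact (mul_eq_zero.mp this).resolve_left two_ne_zero
  rcases eq_or_ne k j with rfl | hkj
  · simp [hplus, hij]
  rcases eq_or_ne k i with rfl | hki
  · simp [hij, hkj]
  · simp [hoff k hki hkj, hkj]

theorem mulVec_eq_smul_of_mulVec_smul_eq {M : Matrix ι ι K} {v : ι → K} {r c : K} (hr : r ≠ 0)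
    (h : M *ᵥ (r • v) = c • r • v) : M *ᵥ v = c • v := by
  rw [mulVec_smul, smul_comm] at h
  exact smul_right_injective _ hr h

end Field

variable {ι : Type*} [Fintype ι] [DecidableEq ι]

theorem exists_eq_smul_one_of_forall_norm_eq_one (M : Matrix ι ι ℝ) (i : ι) {s : ℝ}
    (hs : s ≠ 0) (h : ∀ u : EuclideanSpace ℝ ι, ‖u‖ = 1 → 0 < s * u i →
      ∀ k, (M *ᵥ u) k - (u ⬝ᵥ M *ᵥ u) * u k = 0) :
    ∃ c : ℝ, M = c • 1 := by
  refine M.exists_eq_smul_one_of_forall_apply_eq_one i fun v hv => ?_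
  obtain ⟨w, hw_def⟩ : ∃ w : EuclideanSpace ℝ ι, w = WithLp.toLp 2 (s • v) := ⟨_, rfl⟩
  have hw : w ≠ 0 := fun hw => by simpa [hw_def, hv, hs] using congrArg (· i) hw
  have hr : ‖w‖⁻¹ * s ≠ 0 := by positivity
  have hunit : ‖(WithLp.toLp 2 ((‖w‖⁻¹ * s) • v) : EuclideanSpace ℝ ι)‖ = 1 := by
    rw [mul_smul, WithLp.toLp_smul, ← hw_def]
    exact norm_smul_inv_norm (𝕜 := ℝ) hw
  have hpos : 0 < s * (((‖w‖⁻¹ * s) • v) i) := by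
    rw [Pi.smul_apply, hv, smul_eq_mul, mul_one, mul_left_comm]
    exact mul_pos (by positivity) (mul_self_pos.mpr hs)
  have hu := h _ hunit hpos
  exact ⟨_, mulVec_eq_smul_of_mulVec_smul_eq hr (funext fun k => sub_eq_zero.mp (hu k))⟩

theorem smul_one_mulVec_sub_dotProduct_eq_zero (c : ℝ) {u : EuclideanSpace ℝ ι}
    (hu : ‖u‖ = 1) (k : ι) :
    ((c • 1 : Matrix ι ι ℝ) *ᵥ u) k - (u ⬝ᵥ (c • 1 : Matrix ι ι ℝ) *ᵥ u) * u k = 0 := by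
  have huu : u ⬝ᵥ u = 1 := by
    simp [dotProduct, ← sq, ← EuclideanSpace.real_norm_sq_eq, hu]
  rw [smul_mulVec, one_mulVec, dotProduct_smul, huu]
  simp

theorem forall_norm_eq_one_mulVec_sub_dotProduct_eq_zero_iff (M : Matrix ι ι ℝ) (i : ι)
    {s : ℝ} (hs : s ≠ 0) :
    (∀ u : EuclideanSpace ℝ ι, ‖u‖ = 1 → 0 < s * u i →
      ∀ k, (M *ᵥ u) k - (u ⬝ᵥ M *ᵥ u) * u k = 0) ↔ ∃ c : ℝ, M = c • 1 := by
  refine ⟨M.exists_eq_smul_one_of_forall_norm_eq_one i hs, ?_⟩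
  rintro ⟨c, rfl⟩ u hu - k
  exact smul_one_mulVec_sub_dotProduct_eq_zero c hu k

end Matrix

theorem EuclideanSpace.norm_eq_of_apply_castSucc {m : ℕ} {z : EuclideanSpace ℝ (Fin (m + 1))}
    (hz : z (Fin.last m) = 0) {u : EuclideanSpace ℝ (Fin m)} (hu : ∀ i, u i = z i.castSucc) :
    ‖u‖ = ‖z‖ := by
  rw [← sq_eq_sq₀ (norm_nonneg _) (norm_nonneg _), EuclideanSpace.real_norm_sq_eq,
    EuclideanSpace.real_norm_sq_eq, Fin.sum_univ_castSucc, hz]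
  simp [hu]

theorem EuclideanSpace.image_sphere_inter_last_eq_zero {m : ℕ}
    (pr : EuclideanSpace ℝ (Fin (m + 1)) → EuclideanSpace ℝ (Fin m))
    (hpr : ∀ z i, pr z i = z i.castSucc) :
    pr '' {z | ‖z‖ = 1 ∧ z (Fin.last m) = 0} = Metric.sphere 0 1 := by
  ext u
  simp only [Set.mem_image, Set.mem_ofPred_eq, mem_sphere_zero_iff_norm]
  constructor
  · rintro ⟨z, ⟨hz, hz_last⟩, rfl⟩
    rw [norm_eq_of_apply_castSucc hz_last (hpr z), hz]
  · intro hu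
    have hpr_snoc : pr (WithLp.toLp 2 (Fin.snoc u.ofLp 0)) = u := by
      ext i
      simp [hpr]
    refine ⟨_, ⟨?_, by simp⟩, hpr_snoc⟩
    rw [← norm_eq_of_apply_castSucc (by simp) (hpr _), hpr_snoc, hu]

theorem stmt_18_general (n : ℕ)
    (E : Set (EuclideanSpace ℝ (Fin (n + 2))))
    (hE : E = {z : EuclideanSpace ℝ (Fin (n + 2)) | ‖z‖ = 1 ∧ z (Fin.last (n + 1)) = 0})
    (pr : EuclideanSpace ℝ (Fin (n + 2)) → EuclideanSpace ℝ (Fin (n + 1)))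
    (hpr : ∀ z i, pr z i = z i.castSucc)
    (A₀ Ap : Matrix (Fin (n + 1)) (Fin (n + 1)) ℝ) :
    ((∀ z ∈ E, 0 < z 0 → ∀ k : Fin (n + 1),
        Ap.mulVec (pr z) k - (pr z ⬝ᵥ Ap.mulVec (pr z)) * pr z k = 0) ∧
     (∀ z ∈ E, z 0 < 0 → ∀ k : Fin (n + 1),
        A₀.mulVec (pr z) k - (pr z ⬝ᵥ A₀.mulVec (pr z)) * pr z k = 0)) ↔
      ∃ lam₀ lamp : ℝ, A₀ = lam₀ • (1 : Matrix (Fin (n + 1)) (Fin (n + 1)) ℝ) ∧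
        Ap = lamp • (1 : Matrix (Fin (n + 1)) (Fin (n + 1)) ℝ) := by
  have hsphere : pr '' E = Metric.sphere 0 1 :=
    hE ▸ EuclideanSpace.image_sphere_inter_last_eq_zero pr hpr
  have hpr_zero : ∀ z, pr z 0 = z 0 := fun z => hpr z 0
  have hscalar : ∀ (M : Matrix (Fin (n + 1)) (Fin (n + 1)) ℝ) {s : ℝ}, s ≠ 0 →
      ((∀ z ∈ E, 0 < s * z 0 → ∀ k, (M *ᵥ pr z) k - (pr z ⬝ᵥ M *ᵥ pr z) * pr z k = 0) ↔
        ∃ c : ℝ, M = c • 1) := by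
    intro M s hs
    rw [← M.forall_norm_eq_one_mulVec_sub_dotProduct_eq_zero_iff 0 hs]
    simp_rw [← hpr_zero, ← mem_sphere_zero_iff_norm, ← hsphere, Set.forall_mem_image]
  have hAp := hscalar Ap one_ne_zero
  have hA₀ := hscalar A₀ (neg_ne_zero.mpr one_ne_zero)
  simp only [one_mul, neg_one_mul, neg_pos] at hAp hA₀
  rw [hAp, hA₀]
  tauto

/-- for a continuous PWL field in Lure form `f(x) = Ax + φ(e₁ᵀx)b` with outer
matrices `A₀ = A + α₀be₁ᵀ`, `A_p = A + α_p be₁ᵀ`, the projected field extended to the equator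
(whose value at equator points with `z₁ > 0`, resp. `z₁ < 0`, is `((I − ππᵀ)A_p π(z), 0)`,
resp. with `A₀`) is identically zero on the equator iff `A₀ = λ₀I` and `A_p = λ_pI`. -/
theorem stmt_18 (n : ℕ)
    (E : Set (EuclideanSpace ℝ (Fin (n + 2))))
    (hE : E = {z : EuclideanSpace ℝ (Fin (n + 2)) | ‖z‖ = 1 ∧ z (Fin.last (n + 1)) = 0})
    (pr : EuclideanSpace ℝ (Fin (n + 2)) → EuclideanSpace ℝ (Fin (n + 1)))
    (hpr : ∀ z i, pr z i = z i.castSucc)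
    (A A₀ Ap : Matrix (Fin (n + 1)) (Fin (n + 1)) ℝ)
    (b : Fin (n + 1) → ℝ)
    (φ : ℝ → ℝ) (hφcont : Continuous φ)
    (τ₁ τp α₀ β₀ αp βp : ℝ) (hτ : τ₁ ≤ τp)
    (hφ₀ : ∀ σ : ℝ, σ ≤ τ₁ → φ σ = α₀ * σ + β₀)
    (hφp : ∀ σ : ℝ, τp ≤ σ → φ σ = αp * σ + βp)
    (f : EuclideanSpace ℝ (Fin (n + 1)) → EuclideanSpace ℝ (Fin (n + 1)))
    (hf : ∀ x, ∀ j : Fin (n + 1), f x j = A.mulVec x j + φ (x 0) * b j)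
    (hA₀ : A₀ = A + α₀ • Matrix.vecMulVec b (Pi.single 0 1))
    (hAp : Ap = A + αp • Matrix.vecMulVec b (Pi.single 0 1)) :
    ((∀ z ∈ E, 0 < z 0 → ∀ k : Fin (n + 1),
        Ap.mulVec (pr z) k - (pr z ⬝ᵥ Ap.mulVec (pr z)) * pr z k = 0) ∧
     (∀ z ∈ E, z 0 < 0 → ∀ k : Fin (n + 1),
        A₀.mulVec (pr z) k - (pr z ⬝ᵥ A₀.mulVec (pr z)) * pr z k = 0)) ↔
      ∃ lam₀ lamp : ℝ, A₀ = lam₀ • (1 : Matrix (Fin (n + 1)) (Fin (n + 1)) ℝ) ∧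
        Ap = lamp • (1 : Matrix (Fin (n + 1)) (Fin (n + 1)) ℝ) :=
  stmt_18_general n E hE pr hpr A₀ Ap
end
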